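/- arXiv:2104.11003 — 2 statements merged into one kernel-verified Lean document; each statement's English description precedes it below -/
import Mathlib

section
/- The map φ is a bijection from L(3,n) \ E_{3,n} onto L(3,n) \ S_{3,n}. -/
/-- Membership in the poset `L(3,n)`: triples `(p₁,p₂,p₃)` with `n ≥ p₁ ≥ p₂ ≥ p₃ ≥ 0`. -/
def L3 (n : ℤ) : Set (ℤ × ℤ × ℤ) :=
  {p | p.1 ≤ n ∧ p.2.1 ≤ p.1 ∧ p.2.2 ≤ p.2.1 ∧ 0 ≤ p.2.2}

/-- The starting set `S_{3,m}`. -/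
def S3 (m : ℤ) : Set (ℤ × ℤ × ℤ) :=
  {p | ∃ k ℓ : ℤ, 0 ≤ k ∧ 0 ≤ ℓ ∧ ℓ ≠ 1 ∧ 4 * k + ℓ ≤ m ∧ 2 * (6 * k + ℓ) ≤ 3 * m ∧
    p = (4 * k + ℓ, 2 * k, 0)}

/-- The dual of a partition in `L(3,m)`. -/
def dual (m : ℤ) (p : ℤ × ℤ × ℤ) : ℤ × ℤ × ℤ :=
  (m - p.2.2, m - p.2.1, m - p.1)

/-- The end set `E_{3,m} = {λ* : λ ∈ S_{3,m}}`. -/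
def E3 (m : ℤ) : Set (ℤ × ℤ × ℤ) := dual m '' S3 m

open Classical in
/-- The order matching `φ`. -/
noncomputable def phi (p : ℤ × ℤ × ℤ) : ℤ × ℤ × ℤ :=
  if p ∈ E3 p.1 then
    (p.1 + 1, p.2.1, p.2.2)
  else if (Even (p.2.1 + p.2.2) ∧ (p.1 - 1, p.2.1 + 1, p.2.2) ∉ E3 (p.1 - 1)) ∨
      (¬ Even (p.2.1 + p.2.2) ∧ (p.1 - 1, p.2.1, p.2.2 + 1) ∈ E3 (p.1 - 1)) then
    (p.1, p.2.1 + 1, p.2.2)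
  else
    (p.1, p.2.1, p.2.2 + 1)

/-!
On ordered triples `0 ≤ c ≤ b ≤ a`, membership in `E_{3,a}` and the two tests inside `φ` reduce to
linear inequalities and parities of `a`, `b`, `c`; with this, that `φ` maps into `L(3,n) \ S_{3,n}`
and is injective is linear integer arithmetic. For surjectivity, a preimage of `q`
is sought among its three lower neighbours: lowering the first coordinate works when that lands in
`E_{3,q₁-1}`, lowering the second when `φ` raises it back, and otherwise lowering the third works,
which is where `q ∉ S_{3,n}` enters.
-/

lemma dual_dual (m : ℤ) (p : ℤ × ℤ × ℤ) : dual m (dual m p) = p := by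
  simp [dual]

lemma mem_E3_iff_dual_mem {m : ℤ} {p : ℤ × ℤ × ℤ} : p ∈ E3 m ↔ dual m p ∈ S3 m :=
  ⟨by rintro ⟨q, hq, rfl⟩; rwa [dual_dual], fun h => ⟨_, h, dual_dual m p⟩⟩

section

variable {n m a b c : ℤ}

lemma mem_L3_iff : (a, b, c) ∈ L3 n ↔ a ≤ n ∧ b ≤ a ∧ c ≤ b ∧ 0 ≤ c :=
  Iff.rfl

lemma mem_S3_iff :
    (a, b, c) ∈ S3 m ↔ c = 0 ∧ b % 2 = 0 ∧ 0 ≤ b ∧ 2 * b ≤ a ∧ a ≠ 2 * b + 1 ∧ a ≤ m ∧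
      2 * (a + b) ≤ 3 * m := by
  constructor
  · rintro ⟨k, l, hk, hl, hl1, h1, h2, h⟩
    simp only [Prod.mk.injEq] at h
    omega
  · rintro ⟨rfl, h2, h3, h4, h5, h6, h7⟩
    refine ⟨b / 2, a - 2 * b, by omega, by omega, by omega, by omega, by omega, ?_⟩
    simp only [Prod.mk.injEq, and_true]
    omega

lemma mem_E3_iff :
    (a, b, c) ∈ E3 m ↔ a = m ∧ (m + b) % 2 = 0 ∧ b ≤ m ∧ 0 ≤ c ∧ m + c ≤ 2 * b ∧
      2 * b ≠ m + c + 1 := by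
  rw [mem_E3_iff_dual_mem]
  simp only [dual, mem_S3_iff]
  omega

open Classical in
lemma phi_mk (a b c : ℤ) : phi (a, b, c) =
    if (a, b, c) ∈ E3 a then (a + 1, b, c)
    else if (Even (b + c) ∧ (a - 1, b + 1, c) ∉ E3 (a - 1)) ∨
        (¬ Even (b + c) ∧ (a - 1, b, c + 1) ∈ E3 (a - 1)) then (a, b + 1, c)
    else (a, b, c + 1) :=
  rfl

lemma phi_of_mem_E3 (h : (a, b, c) ∈ E3 a) : phi (a, b, c) = (a + 1, b, c) :=
  if_pos h

/-- When `b + c` is even, `(a - 1, b + 1, c) ∈ E_{3,a-1}` would force `(a, b, c) ∈ E_{3,a}`, so outside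
`E_{3,a}` the map `φ` then always raises the second coordinate. -/
lemma phi_eq_of_le (hcb : c ≤ b) (hba : b ≤ a) (hc : 0 ≤ c) :
    phi (a, b, c) =
      if (a + b) % 2 = 0 ∧ a + c ≤ 2 * b ∧ 2 * b ≠ a + c + 1 then (a + 1, b, c)
      else if (b + c) % 2 = 0 ∨ ((a + b) % 2 = 1 ∧ b < a ∧ a + c ≤ 2 * b) then (a, b + 1, c)
      else (a, b, c + 1) := by
  rw [phi_mk]
  simp only [mem_E3_iff, Int.even_iff, true_and]
  split_ifs <;> simp only [Prod.mk.injEq] <;> omega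

lemma phi_mapsTo (n : ℤ) : Set.MapsTo phi (L3 n \ E3 n) (L3 n \ S3 n) := by
  rintro ⟨a, b, c⟩ ⟨hL, hE⟩
  rw [mem_L3_iff] at hL
  rw [mem_E3_iff] at hE
  rw [phi_eq_of_le hL.2.2.1 hL.2.1 hL.2.2.2]
  split_ifs <;>
  · simp only [Set.mem_sdiff, mem_L3_iff, mem_S3_iff]
    omega

lemma phi_injOn (n : ℤ) : Set.InjOn phi (L3 n) := by
  rintro ⟨a, b, c⟩ hp ⟨a', b', c'⟩ hp' h
  obtain ⟨-, hba, hcb, hc⟩ := mem_L3_iff.1 hp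
  obtain ⟨-, hba', hcb', hc'⟩ := mem_L3_iff.1 hp'
  rw [phi_eq_of_le hcb hba hc, phi_eq_of_le hcb' hba' hc'] at h
  split_ifs at h <;>
  · simp only [Prod.mk.injEq] at h ⊢
    omega

lemma lower_first_mem (hq : (a, b, c) ∈ L3 n) (h : (a - 1, b, c) ∈ E3 (a - 1)) :
    (a - 1, b, c) ∈ L3 n \ E3 n := by
  rw [mem_L3_iff] at hq
  rw [mem_E3_iff] at h
  simp only [Set.mem_sdiff, mem_L3_iff, mem_E3_iff]
  omega

lemma lower_second_mem (hq : (a, b, c) ∈ L3 n) (hcb : c < b) (h : phi (a, b - 1, c) = (a, b, c)) :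
    (a, b - 1, c) ∈ L3 n \ E3 n := by
  rw [mem_L3_iff] at hq
  refine ⟨by rw [mem_L3_iff]; omega, fun hE => ?_⟩
  obtain rfl := (mem_E3_iff.1 hE).1
  rw [phi_of_mem_E3 hE, Prod.mk.injEq] at h
  omega

lemma lower_third_mem_and_phi_eq (hq : (a, b, c) ∈ L3 n \ S3 n)
    (h1 : (a - 1, b, c) ∉ E3 (a - 1)) (h2 : c < b → phi (a, b - 1, c) ≠ (a, b, c)) :
    (a, b, c - 1) ∈ L3 n \ E3 n ∧ phi (a, b, c - 1) = (a, b, c) := by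
  obtain ⟨hL, hS⟩ := hq
  rw [mem_L3_iff] at hL
  rw [mem_S3_iff] at hS
  rw [mem_E3_iff] at h1
  replace h2 : c < b →
      ¬(((b - 1 + c) % 2 = 0 ∨ ((a + (b - 1)) % 2 = 1 ∧ b - 1 < a ∧ a + c ≤ 2 * (b - 1))) ∧
        ¬((a + (b - 1)) % 2 = 0 ∧ a + c ≤ 2 * (b - 1) ∧ 2 * (b - 1) ≠ a + c + 1)) := by
    rintro hcb ⟨hM, hE⟩
    refine h2 hcb ?_
    rw [phi_eq_of_le (by omega) (by omega) hL.2.2.2, if_neg hE, if_pos hM, sub_add_cancel]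
  have hc : 0 < c := by omega
  refine ⟨⟨by rw [mem_L3_iff]; omega, by rw [mem_E3_iff]; omega⟩, ?_⟩
  rw [phi_eq_of_le (by omega) (by omega) (by omega)]
  split_ifs <;> simp only [Prod.mk.injEq, true_and] <;> omega

end

lemma phi_surjOn (n : ℤ) : Set.SurjOn phi (L3 n \ E3 n) (L3 n \ S3 n) := by
  rintro ⟨a, b, c⟩ hq
  by_cases h1 : (a - 1, b, c) ∈ E3 (a - 1)
  · exact ⟨_, lower_first_mem hq.1 h1, by rw [phi_of_mem_E3 h1, sub_add_cancel]⟩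
  by_cases h2 : c < b ∧ phi (a, b - 1, c) = (a, b, c)
  · exact ⟨_, lower_second_mem hq.1 h2.1 h2.2, h2.2⟩
  exact ⟨_, lower_third_mem_and_phi_eq hq h1 fun hcb h => h2 ⟨hcb, h⟩⟩

theorem phi_bijOn_general (n : ℤ) :
    Set.BijOn phi (L3 n \ E3 n) (L3 n \ S3 n) :=
  ⟨phi_mapsTo n, (phi_injOn n).mono Set.sdiff_subset, phi_surjOn n⟩

/-- `φ` is a bijection from `L(3,n) \ E_{3,n}` onto `L(3,n) \ S_{3,n}`. -/
theorem phi_bijOn (n : ℤ) (hn : 0 < n) :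
    Set.BijOn phi (L3 n \ E3 n) (L3 n \ S3 n) :=
  phi_bijOn_general n
end

section
/- For all integers k ≥ 0, ℓ ≥ 2, and c with 1 ≤ c ≤ ℓ−2, the partition λ = (4k+ℓ, 2k+c, c) satisfies: λ ∉ E_{3,λ1}, λ2+λ3 is even, and (λ1−1, λ2+1, λ3) ∉ E_{3,λ1−1}. -/
/-!
A triple `(m, b, d)` in `E_{3,m}` is the dual of some `(4k'+ℓ', 2k', 0)`, so `m - b = 2k'` is even
and `ℓ' = 2b - m - d` is a nonnegative integer different from `1`. For `λ = (4k+ℓ, 2k+c, c)` this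
gives `ℓ' = c - ℓ < 0`; for `(λ₁-1, λ₂+1, λ₃)` it gives `ℓ' = c - ℓ + 3 ≤ 1`, hence `ℓ' = 0`, and
then `m - b = 2k + 1` is odd.
-/
theorem even_sub_of_mem_E3 {m : ℤ} {p : ℤ × ℤ × ℤ} (h : p ∈ E3 m) : Even (m - p.2.1) := by
  obtain ⟨q, ⟨k, l, -, -, -, -, -, rfl⟩, rfl⟩ := h
  exact ⟨k, by simp only [dual]; ring⟩

theorem nonneg_and_ne_one_of_mem_E3 {m : ℤ} {p : ℤ × ℤ × ℤ} (h : p ∈ E3 m) :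
    0 ≤ 2 * p.2.1 - m - p.2.2 ∧ 2 * p.2.1 - m - p.2.2 ≠ 1 := by
  obtain ⟨q, ⟨k, l, -, hl, hl1, -, -, rfl⟩, rfl⟩ := h
  simp only [dual]
  omega

theorem lem_B2_general (k l c : ℤ) (hc2 : c ≤ l - 2) :
    ((4 * k + l, 2 * k + c, c) : ℤ × ℤ × ℤ) ∉ E3 (4 * k + l) ∧
    Even ((2 * k + c) + c) ∧
    ((4 * k + l - 1, 2 * k + c + 1, c) : ℤ × ℤ × ℤ) ∉ E3 (4 * k + l - 1) := by
  refine ⟨fun h => ?_, ⟨k + c, by ring⟩, fun h => ?_⟩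
  · have hl_nonneg := (nonneg_and_ne_one_of_mem_E3 h).1
    dsimp only at hl_nonneg
    omega
  · obtain ⟨hl_nonneg, hl_ne_one⟩ := nonneg_and_ne_one_of_mem_E3 h
    obtain ⟨r, hr⟩ := even_sub_of_mem_E3 h
    dsimp only at hl_nonneg hl_ne_one hr
    omega

/-- Lemma (B₂): for `k ≥ 0`, `ℓ ≥ 2`, `1 ≤ c ≤ ℓ-2`, `λ = (4k+ℓ, 2k+c, c)`
satisfies `λ ∉ E_{3,λ₁}`, `λ₂ + λ₃` is even, and `(λ₁-1, λ₂+1, λ₃) ∉ E_{3,λ₁-1}`. -/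
theorem lem_B2 (k l c : ℤ) (hk : 0 ≤ k) (hl : 2 ≤ l) (hc1 : 1 ≤ c) (hc2 : c ≤ l - 2) :
    ((4 * k + l, 2 * k + c, c) : ℤ × ℤ × ℤ) ∉ E3 (4 * k + l) ∧
    Even ((2 * k + c) + c) ∧
    ((4 * k + l - 1, 2 * k + c + 1, c) : ℤ × ℤ × ℤ) ∉ E3 (4 * k + l - 1) :=
  lem_B2_general k l c hc2
end
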